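/- Let X and Y be normed linear spaces over F, and let T be a nonzero bounded linear operator from X to Y. Then T is a smooth point of the space of bounded operators (i.e., Birkhoff-James orthogonality is right-additive at T) if and only if for every bounded linear operator A the set Ω(T,A) := { λ : ∃ ((xₙ, yₙ*)) with ‖xₙ‖ = ‖yₙ*‖ = 1, yₙ*(T xₙ) → ‖T‖, yₙ*(A xₙ) → λ } is a singleton. -/

import Mathlib

/-!
Write `Ω(T, A)` (`normingLimits T A`) for the set of limits in the statement. It is nonempty,
since `y (A x)` stays in a compact disc, and `0 ∈ Ω(T, A)` implies `T ⊥_B A`. Conversely, if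
`T ⊥_B A` then norming `T + t A` for small `t > 0` produces a point of `Ω(T, A)` with
nonnegative real part.

If `Ω(T, A)` contains `l₁ ≠ l₂`, the operators `A - (l₁/‖T‖) T` and `(l₂/‖T‖) T - A` are both
orthogonal to `T`, but their sum is a nonzero multiple of `T`; so smoothness forces singletons.
If every `Ω(T, ·)` is a singleton, it is additive and homogeneous in `A`, and for `T ⊥_B A` with
`Ω(T, A) = {l}` the point of `Ω(T, -conj l • A) = {-|l|²}` with nonnegative real part gives `l = 0`.
-/

open Filter Topology

def BirkhoffOrthogonal (𝕜 : Type*) {E : Type*} [NormedField 𝕜] [SeminormedAddCommGroup E]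
    [NormedSpace 𝕜 E] (x y : E) : Prop :=
  ∀ c : 𝕜, ‖x‖ ≤ ‖x + c • y‖

theorem not_birkhoffOrthogonal_smul_self {𝕜 E : Type*} [NormedField 𝕜] [NormedAddCommGroup E]
    [NormedSpace 𝕜 E] {x : E} (hx : x ≠ 0) {c : 𝕜} (hc : c ≠ 0) :
    ¬ BirkhoffOrthogonal 𝕜 x (c • x) := fun h => by
  simpa [smul_smul, hc, hx] using h (-c⁻¹)

namespace ContinuousLinearMap

variable {𝕜 X Y : Type*} [RCLike 𝕜] [NormedAddCommGroup X] [NormedSpace 𝕜 X]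
  [NormedAddCommGroup Y] [NormedSpace 𝕜 Y]

def normingLimits (T A : X →L[𝕜] Y) : Set 𝕜 :=
  {lam : 𝕜 | ∃ (x : ℕ → X) (y : ℕ → (Y →L[𝕜] 𝕜)),
    (∀ n, ‖x n‖ = 1) ∧ (∀ n, ‖y n‖ = 1) ∧
    Tendsto (fun n => y n (T (x n))) atTop (𝓝 (‖T‖ : 𝕜)) ∧
    Tendsto (fun n => y n (A (x n))) atTop (𝓝 lam)}

theorem norm_apply_apply_le (A : X →L[𝕜] Y) {x : X} {y : Y →L[𝕜] 𝕜} (hx : ‖x‖ ≤ 1)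
    (hy : ‖y‖ ≤ 1) : ‖y (A x)‖ ≤ ‖A‖ :=
  calc ‖y (A x)‖ ≤ 1 * ‖A x‖ := y.le_of_opNorm_le hy _
    _ ≤ ‖A‖ := by rw [one_mul]; exact A.unit_le_opNorm x hx

theorem exists_norming_pair (S : X →L[𝕜] Y) (hS : S ≠ 0) {c : ℝ} (hc : c < ‖S‖) :
    ∃ (x : X) (y : Y →L[𝕜] 𝕜), ‖x‖ = 1 ∧ ‖y‖ = 1 ∧ y (S x) = ‖S x‖ ∧ c < ‖S x‖ := by
  have hc' : (max c 0).toNNReal < ‖S‖₊ := by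
    rw [Real.toNNReal_lt_iff_lt_coe (le_max_right c 0), coe_nnnorm]
    exact max_lt hc (norm_pos_iff.2 hS)
  obtain ⟨x, hx, hSx⟩ := S.exists_nnnorm_eq_one_lt_apply_of_lt_opNNNorm hc'
  rw [Real.toNNReal_lt_iff_lt_coe (le_max_right c 0), coe_nnnorm, max_lt_iff] at hSx
  obtain ⟨y, hy, hyS⟩ := exists_dual_vector 𝕜 (S x) hSx.2.ne'
  exact ⟨x, y, by simpa using congrArg NNReal.toReal hx, hy, hyS, hSx.1⟩

theorem tendsto_apply_of_almost_norming {S : ℕ → X →L[𝕜] Y} {T : X →L[𝕜] Y} {ε : ℕ → ℝ}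
    (hS : Tendsto S atTop (𝓝 T)) (hε : Tendsto ε atTop (𝓝 0)) {x : ℕ → X}
    {y : ℕ → Y →L[𝕜] 𝕜} (hx : ∀ n, ‖x n‖ = 1) (hy : ∀ n, ‖y n‖ = 1)
    (hxy : ∀ n, y n (S n (x n)) = ‖S n (x n)‖) (hlow : ∀ n, ‖S n‖ - ε n < ‖S n (x n)‖) :
    Tendsto (fun n => y n (T (x n))) atTop (𝓝 (‖T‖ : 𝕜)) := by
  have hSx : Tendsto (fun n => ‖S n (x n)‖) atTop (𝓝 ‖T‖) := by
    refine tendsto_of_tendsto_of_tendsto_of_le_of_le (by simpa using hS.norm.sub hε)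
      hS.norm (fun n => (hlow n).le) fun n => (S n).unit_le_opNorm _ (hx n).le
  have hdiff : Tendsto (fun n => y n (T (x n)) - y n (S n (x n))) atTop (𝓝 0) := by
    refine squeeze_zero_norm (fun n => ?_) (tendsto_iff_norm_sub_tendsto_zero.1 hS)
    rw [← map_sub, ← sub_apply, norm_sub_rev]
    exact norm_apply_apply_le _ (hx n).le (hy n).le
  simpa [hxy] using hdiff.add ((RCLike.continuous_ofReal.tendsto _).comp hSx)

theorem exists_subseq_tendsto_mem_normingLimits (T A : X →L[𝕜] Y) {x : ℕ → X}
    {y : ℕ → Y →L[𝕜] 𝕜} (hx : ∀ n, ‖x n‖ = 1) (hy : ∀ n, ‖y n‖ = 1)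
    (hT : Tendsto (fun n => y n (T (x n))) atTop (𝓝 (‖T‖ : 𝕜))) :
    ∃ φ : ℕ → ℕ, StrictMono φ ∧ ∃ l ∈ normingLimits T A,
      Tendsto (fun n => y (φ n) (A (x (φ n)))) atTop (𝓝 l) := by
  obtain ⟨l, -, φ, hφ, hlim⟩ := tendsto_subseq_of_bounded (Metric.isBounded_closedBall
    (x := (0 : 𝕜)) (r := ‖A‖)) fun n => mem_closedBall_zero_iff.2 <|
      norm_apply_apply_le A (hx n).le (hy n).le
  exact ⟨φ, hφ, l, ⟨x ∘ φ, y ∘ φ, fun n => hx _, fun n => hy _,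
    hT.comp hφ.tendsto_atTop, hlim⟩, hlim⟩

theorem tendsto_apply_of_normingLimits_eq_singleton {T A : X →L[𝕜] Y} {l : 𝕜}
    (hl : normingLimits T A = {l}) {x : ℕ → X} {y : ℕ → Y →L[𝕜] 𝕜} (hx : ∀ n, ‖x n‖ = 1)
    (hy : ∀ n, ‖y n‖ = 1) (hT : Tendsto (fun n => y n (T (x n))) atTop (𝓝 (‖T‖ : 𝕜))) :
    Tendsto (fun n => y n (A (x n))) atTop (𝓝 l) := by
  refine tendsto_of_subseq_tendsto fun ns hns => ?_
  obtain ⟨φ, -, l', hl', hlim⟩ := exists_subseq_tendsto_mem_normingLimits T A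
    (fun n => hx (ns n)) (fun n => hy (ns n)) (hT.comp hns)
  rw [hl, Set.mem_singleton_iff] at hl'
  exact ⟨φ, hl' ▸ hlim⟩

theorem normingLimits_nonempty {T : X →L[𝕜] Y} (hT : T ≠ 0) (A : X →L[𝕜] Y) :
    (normingLimits T A).Nonempty := by
  have hε : ∀ n : ℕ, 0 < 1 / ((n : ℝ) + 1) := fun n => by positivity
  choose x y hx hy hxy hlow using fun n : ℕ =>
    exists_norming_pair T hT (c := ‖T‖ - 1 / ((n : ℝ) + 1)) (by linarith [hε n])
  obtain ⟨-, -, l, hl, -⟩ := exists_subseq_tendsto_mem_normingLimits T A hx hy <|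
    tendsto_apply_of_almost_norming tendsto_const_nhds tendsto_one_div_add_atTop_nhds_zero_nat
      hx hy hxy hlow
  exact ⟨l, hl⟩

theorem exists_mem_normingLimits_re_nonneg {T A : X →L[𝕜] Y} (hT : T ≠ 0)
    (horth : ∀ t : ℝ, 0 < t → ‖T‖ ≤ ‖T + (t : 𝕜) • A‖) :
    ∃ l ∈ normingLimits T A, 0 ≤ RCLike.re l := by
  set t : ℕ → ℝ := fun n => 1 / ((n : ℝ) + 1)
  have ht : ∀ n, 0 < t n := fun n => by positivity
  have ht0 : Tendsto t atTop (𝓝 0) := tendsto_one_div_add_atTop_nhds_zero_nat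
  set S : ℕ → X →L[𝕜] Y := fun n => T + (t n : 𝕜) • A
  have hS0 : ∀ n, S n ≠ 0 := fun n hS => by
    have := horth (t n) (ht n)
    rw [show T + (t n : 𝕜) • A = S n from rfl, hS, norm_zero, norm_le_zero_iff] at this
    exact hT this
  have hST : Tendsto S atTop (𝓝 T) := by
    simpa [S] using (tendsto_const_nhds (x := T)).add
      ((((RCLike.continuous_ofReal (K := 𝕜)).tendsto 0).comp ht0).smul_const A)
  choose x y hx hy hxy hlow using fun n =>
    exists_norming_pair (S n) (hS0 n) (c := ‖S n‖ - t n ^ 2) (by linarith [pow_pos (ht n) 2])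
  -- `‖T‖ - t² < re y((T + t A) x) ≤ ‖T‖ + t re y(A x)`
  have hre : ∀ n, -t n ≤ RCLike.re (y n (A (x n))) := by
    intro n
    have hsplit : RCLike.re (y n (S n (x n))) =
        RCLike.re (y n (T (x n))) + t n * RCLike.re (y n (A (x n))) := by
      simp [S]
    have hTle : RCLike.re (y n (T (x n))) ≤ ‖T‖ :=
      (RCLike.re_le_norm _).trans (norm_apply_apply_le T (hx n).le (hy n).le)
    have hSlow : ‖T‖ - t n ^ 2 < RCLike.re (y n (S n (x n))) := by
      rw [hxy n, RCLike.ofReal_re]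
      linarith [hlow n, horth (t n) (ht n)]
    nlinarith [ht n]
  obtain ⟨φ, hφ, l, hl, hlim⟩ := exists_subseq_tendsto_mem_normingLimits T A hx hy <|
    tendsto_apply_of_almost_norming hST (by simpa using ht0.pow 2) hx hy hxy hlow
  refine ⟨l, hl, ?_⟩
  simpa using le_of_tendsto_of_tendsto' (ht0.comp hφ.tendsto_atTop).neg
    ((RCLike.continuous_re.tendsto l).comp hlim) fun n => hre (φ n)

theorem normingLimits_smul_subset {T A : X →L[𝕜] Y} {l : 𝕜} (hl : normingLimits T A = {l})
    (c : 𝕜) : normingLimits T (c • A) ⊆ {c * l} := by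
  rintro μ ⟨x, y, hx, hy, hT, hμ⟩
  refine tendsto_nhds_unique hμ ?_
  simpa using (tendsto_apply_of_normingLimits_eq_singleton hl hx hy hT).const_mul c

theorem normingLimits_add_subset {T A₁ A₂ : X →L[𝕜] Y} {l₁ l₂ : 𝕜}
    (hl₁ : normingLimits T A₁ = {l₁}) (hl₂ : normingLimits T A₂ = {l₂}) :
    normingLimits T (A₁ + A₂) ⊆ {l₁ + l₂} := by
  rintro μ ⟨x, y, hx, hy, hT, hμ⟩
  refine tendsto_nhds_unique hμ ?_
  simpa using (tendsto_apply_of_normingLimits_eq_singleton hl₁ hx hy hT).add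
    (tendsto_apply_of_normingLimits_eq_singleton hl₂ hx hy hT)

theorem eq_zero_of_normingLimits_eq_singleton {T A : X →L[𝕜] Y} (hT : T ≠ 0)
    (horth : BirkhoffOrthogonal 𝕜 T A) {l : 𝕜} (hl : normingLimits T A = {l}) : l = 0 := by
  obtain ⟨μ, hμ, hre⟩ := exists_mem_normingLimits_re_nonneg (A := -(starRingEnd 𝕜 l) • A) hT
    fun t _ => by rw [smul_smul]; exact horth _
  rw [normingLimits_smul_subset hl _ hμ, neg_mul, RCLike.conj_mul, map_neg,
    ← RCLike.ofReal_pow, RCLike.ofReal_re] at hre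
  exact norm_eq_zero.1 (by nlinarith [norm_nonneg l])

theorem add_smul_mem_normingLimits {T A : X →L[𝕜] Y} {l : 𝕜} (hl : l ∈ normingLimits T A)
    (a b : 𝕜) : a * l + b * ‖T‖ ∈ normingLimits T (a • A + b • T) := by
  obtain ⟨x, y, hx, hy, hT, hA⟩ := hl
  exact ⟨x, y, hx, hy, hT, by simpa using (hA.const_mul a).add (hT.const_mul b)⟩

theorem birkhoffOrthogonal_of_zero_mem_normingLimits {T A : X →L[𝕜] Y}
    (h : 0 ∈ normingLimits T A) : BirkhoffOrthogonal 𝕜 T A := by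
  intro c
  obtain ⟨x, y, hx, hy, hT, hA⟩ := h
  refine le_of_tendsto (by simpa using (hT.add (hA.const_mul c)).norm) <|
    Eventually.of_forall fun n => ?_
  simpa using norm_apply_apply_le (T + c • A) (hx n).le (hy n).le

theorem eq_of_mem_normingLimits {T A : X →L[𝕜] Y} (hT : T ≠ 0)
    (hadd : ∀ A₁ A₂ : X →L[𝕜] Y, BirkhoffOrthogonal 𝕜 T A₁ → BirkhoffOrthogonal 𝕜 T A₂ →
      BirkhoffOrthogonal 𝕜 T (A₁ + A₂))
    {l₁ l₂ : 𝕜} (hl₁ : l₁ ∈ normingLimits T A) (hl₂ : l₂ ∈ normingLimits T A) : l₁ = l₂ := by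
  have hTn : (‖T‖ : 𝕜) ≠ 0 := RCLike.ofReal_ne_zero.2 (norm_ne_zero_iff.2 hT)
  by_contra hne
  have h₁ : BirkhoffOrthogonal 𝕜 T ((1 : 𝕜) • A + (-l₁ / ‖T‖) • T) :=
    birkhoffOrthogonal_of_zero_mem_normingLimits <| by
      convert add_smul_mem_normingLimits hl₁ 1 (-l₁ / ‖T‖) using 1
      field_simp
      ring
  have h₂ : BirkhoffOrthogonal 𝕜 T ((-1 : 𝕜) • A + (l₂ / ‖T‖) • T) :=
    birkhoffOrthogonal_of_zero_mem_normingLimits <| by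
      convert add_smul_mem_normingLimits hl₂ (-1) (l₂ / ‖T‖) using 1
      field_simp
      ring
  have hsum : (1 : 𝕜) • A + (-l₁ / ‖T‖) • T + ((-1 : 𝕜) • A + (l₂ / ‖T‖) • T) =
      ((l₂ - l₁) / ‖T‖) • T := by
    module
  refine not_birkhoffOrthogonal_smul_self hT
    (div_ne_zero (sub_ne_zero.2 (Ne.symm hne)) hTn) ?_
  exact hsum ▸ hadd _ _ h₁ h₂

end ContinuousLinearMap

open ContinuousLinearMap

theorem stmt10 {𝕜 X Y : Type*} [RCLike 𝕜] [NormedAddCommGroup X] [NormedSpace 𝕜 X]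
    [NormedAddCommGroup Y] [NormedSpace 𝕜 Y] (T : X →L[𝕜] Y) (hT : T ≠ 0) :
    (∀ A₁ A₂ : X →L[𝕜] Y, (∀ lam : 𝕜, ‖T‖ ≤ ‖T + lam • A₁‖) →
      (∀ lam : 𝕜, ‖T‖ ≤ ‖T + lam • A₂‖) → (∀ lam : 𝕜, ‖T‖ ≤ ‖T + lam • (A₁ + A₂)‖)) ↔
    (∀ A : X →L[𝕜] Y, ∃ lam₀ : 𝕜,
      {lam : 𝕜 | ∃ (x : ℕ → X) (y : ℕ → (Y →L[𝕜] 𝕜)),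
        (∀ n, ‖x n‖ = 1) ∧ (∀ n, ‖y n‖ = 1) ∧
        Tendsto (fun n => y n (T (x n))) atTop (𝓝 (‖T‖ : 𝕜)) ∧
        Tendsto (fun n => y n (A (x n))) atTop (𝓝 lam)} = {lam₀}) := by
  change (∀ A₁ A₂ : X →L[𝕜] Y, BirkhoffOrthogonal 𝕜 T A₁ → BirkhoffOrthogonal 𝕜 T A₂ →
      BirkhoffOrthogonal 𝕜 T (A₁ + A₂)) ↔ ∀ A : X →L[𝕜] Y, ∃ l, normingLimits T A = {l}
  refine ⟨fun hadd A => ?_, fun hsingle A₁ A₂ h₁ h₂ => ?_⟩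
  · obtain ⟨l, hl⟩ := normingLimits_nonempty hT A
    exact ⟨l, Set.eq_singleton_iff_unique_mem.2
      ⟨hl, fun _ hμ => eq_of_mem_normingLimits hT hadd hμ hl⟩⟩
  · obtain ⟨l₁, hl₁⟩ := hsingle A₁
    obtain ⟨l₂, hl₂⟩ := hsingle A₂
    obtain ⟨l, hl⟩ := hsingle (A₁ + A₂)
    have hsum : l = l₁ + l₂ := normingLimits_add_subset hl₁ hl₂ (hl ▸ Set.mem_singleton l)
    rw [eq_zero_of_normingLimits_eq_singleton hT h₁ hl₁,
      eq_zero_of_normingLimits_eq_singleton hT h₂ hl₂, add_zero] at hsum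
    exact birkhoffOrthogonal_of_zero_mem_normingLimits (hsum ▸ hl ▸ Set.mem_singleton l)
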